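/- Set a₁ = 185760/328, a₂ = −528608/328, a₃ = −134912/328, b₁ = 13774080/2952, b₂ = −601856/8856, b₃ = 523957248/26568, c₁ = 30960/328, c₂ = 125360/984, c₃ = 31603200/26568. Then the determinant of the 7×7 real matrix whose rows are (525, −20c₁, b₁−20c₂, b₂−20c₃, b₃, 0, 0), (0, 525, −20c₁, b₁−20c₂, b₂−20c₃, b₃, 0), (0, 0, 525, −20c₁, b₁−20c₂, b₂−20c₃, b₃), (450, −(9c₁+a₁), −(9c₂+a₂), −(9c₃+a₃), 0, 0, 0), (0, 450, −(9c₁+a₁), −(9c₂+a₂), −(9c₃+a₃), 0, 0), (0, 0, 450, −(9c₁+a₁), −(9c₂+a₂), −(9c₃+a₃), 0), (0, 0, 0, 450, −(9c₁+a₁), −(9c₂+a₂), −(9c₃+a₃)) equals −1457890459574161592339200000/1681; in particular it is nonzero. -/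
import Mathlib

set_option maxRecDepth 10000
set_option maxHeartbeats 4000000

noncomputable def Lmat : Matrix (Fin 7) (Fin 7) ℝ :=
 !![1, 0, 0, 0, 0, 0, 0;
   0, 1, 0, 0, 0, 0, 0;
   0, 0, 1, 0, 0, 0, 0;
   6/7, 774/2009, -51327286/43243725, 1, 0, 0, 0;
   0, 6/7, 774/2009, -22096396623/251728251296, 1, 0, 0;
   0, 0, 6/7, 7172280675/251728251296, -11633582753028285/85953694457338333, 1, 0;
   0, 0, 0, 15956934525/251728251296, -10511222898244275/85953694457338333, 7406049881257705745/50882862838323456268, 1]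

noncomputable def Umat : Matrix (Fin 7) (Fin 7) ℝ :=
 !![525, -77400/41, 86840/41, -8803744/369, 808576/41, 0, 0;
   0, 525, -77400/41, 86840/41, -8803744/369, 808576/41, 0;
   0, 0, 525, -77400/41, 86840/41, -8803744/369, 808576/41;
   0, 0, 0, 503456502592/70919709, -1843281244592/354598545, -573112718613184/15956934525, 41502011604736/1772992725;
   0, 0, 0, 0, 85953694457338333/9675804659190, -788448247391760674/72568534943925, -44696268606186904/8063170549325;
   0, 0, 0, 0, 0, 4172394752742523413976/429768472286691665, -7873888510959257287776/429768472286691665;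
   0, 0, 0, 0, 0, 0, -373584430265878908036920/38162147128742592201]

lemma Lmat_det : Lmat.det = 1 := by
  rw [Matrix.det_of_lowerTriangular Lmat (by
    intro i j hij
    fin_cases i <;> fin_cases j <;> first | exact absurd hij (by decide) | norm_num [Lmat])]
  norm_num [Lmat, Fin.prod_univ_succ]

lemma Umat_det : Umat.det = -1457890459574161592339200000 / 1681 := by
  rw [Matrix.det_of_upperTriangular (by
    intro i j hij
    fin_cases i <;> fin_cases j <;> first | exact absurd hij (by decide) | norm_num [Umat])]
  norm_num [Umat, Fin.prod_univ_succ]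


/-- The 7×7 Sylvester-matrix resultant `Q₁₂` for the explicit example with
ρ ≠ 0 equals `−1457890459574161592339200000/1681`; in particular it is
nonzero. -/
theorem stmt11 (a₁ a₂ a₃ b₁ b₂ b₃ c₁ c₂ c₃ : ℝ)
    (ha₁ : a₁ = 185760 / 328) (ha₂ : a₂ = -528608 / 328) (ha₃ : a₃ = -134912 / 328)
    (hb₁ : b₁ = 13774080 / 2952) (hb₂ : b₂ = -601856 / 8856) (hb₃ : b₃ = 523957248 / 26568)
    (hc₁ : c₁ = 30960 / 328) (hc₂ : c₂ = 125360 / 984) (hc₃ : c₃ = 31603200 / 26568) :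
    (Matrix.det
      !![(525 : ℝ), -20 * c₁, b₁ - 20 * c₂, b₂ - 20 * c₃, b₃, 0, 0;
         0, 525, -20 * c₁, b₁ - 20 * c₂, b₂ - 20 * c₃, b₃, 0;
         0, 0, 525, -20 * c₁, b₁ - 20 * c₂, b₂ - 20 * c₃, b₃;
         450, -(9 * c₁ + a₁), -(9 * c₂ + a₂), -(9 * c₃ + a₃), 0, 0, 0;
         0, 450, -(9 * c₁ + a₁), -(9 * c₂ + a₂), -(9 * c₃ + a₃), 0, 0;
         0, 0, 450, -(9 * c₁ + a₁), -(9 * c₂ + a₂), -(9 * c₃ + a₃), 0;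
         0, 0, 0, 450, -(9 * c₁ + a₁), -(9 * c₂ + a₂), -(9 * c₃ + a₃)]
      = -1457890459574161592339200000 / 1681)
    ∧ (Matrix.det
      !![(525 : ℝ), -20 * c₁, b₁ - 20 * c₂, b₂ - 20 * c₃, b₃, 0, 0;
         0, 525, -20 * c₁, b₁ - 20 * c₂, b₂ - 20 * c₃, b₃, 0;
         0, 0, 525, -20 * c₁, b₁ - 20 * c₂, b₂ - 20 * c₃, b₃;
         450, -(9 * c₁ + a₁), -(9 * c₂ + a₂), -(9 * c₃ + a₃), 0, 0, 0;
         0, 450, -(9 * c₁ + a₁), -(9 * c₂ + a₂), -(9 * c₃ + a₃), 0, 0;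
         0, 0, 450, -(9 * c₁ + a₁), -(9 * c₂ + a₂), -(9 * c₃ + a₃), 0;
         0, 0, 0, 450, -(9 * c₁ + a₁), -(9 * c₂ + a₂), -(9 * c₃ + a₃)]
      ≠ 0) := by
  subst ha₁ ha₂ ha₃ hb₁ hb₂ hb₃ hc₁ hc₂ hc₃
  have hM : (!![(525 : ℝ), -20 * (30960 / 328), 13774080 / 2952 - 20 * (125360 / 984), -601856 / 8856 - 20 * (31603200 / 26568), 523957248 / 26568, 0, 0;
         0, 525, -20 * (30960 / 328), 13774080 / 2952 - 20 * (125360 / 984), -601856 / 8856 - 20 * (31603200 / 26568), 523957248 / 26568, 0;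
         0, 0, 525, -20 * (30960 / 328), 13774080 / 2952 - 20 * (125360 / 984), -601856 / 8856 - 20 * (31603200 / 26568), 523957248 / 26568;
         450, -(9 * (30960 / 328) + 185760 / 328), -(9 * (125360 / 984) + -528608 / 328), -(9 * (31603200 / 26568) + -134912 / 328), 0, 0, 0;
         0, 450, -(9 * (30960 / 328) + 185760 / 328), -(9 * (125360 / 984) + -528608 / 328), -(9 * (31603200 / 26568) + -134912 / 328), 0, 0;
         0, 0, 450, -(9 * (30960 / 328) + 185760 / 328), -(9 * (125360 / 984) + -528608 / 328), -(9 * (31603200 / 26568) + -134912 / 328), 0;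
         0, 0, 0, 450, -(9 * (30960 / 328) + 185760 / 328), -(9 * (125360 / 984) + -528608 / 328), -(9 * (31603200 / 26568) + -134912 / 328)])
      = Lmat * Umat := by
    ext i j
    fin_cases i <;> fin_cases j <;>
      norm_num [Lmat, Umat, Matrix.mul_apply, Fin.sum_univ_succ]
  have key : (Matrix.det
      !![(525 : ℝ), -20 * (30960 / 328), 13774080 / 2952 - 20 * (125360 / 984), -601856 / 8856 - 20 * (31603200 / 26568), 523957248 / 26568, 0, 0;
         0, 525, -20 * (30960 / 328), 13774080 / 2952 - 20 * (125360 / 984), -601856 / 8856 - 20 * (31603200 / 26568), 523957248 / 26568, 0;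
         0, 0, 525, -20 * (30960 / 328), 13774080 / 2952 - 20 * (125360 / 984), -601856 / 8856 - 20 * (31603200 / 26568), 523957248 / 26568;
         450, -(9 * (30960 / 328) + 185760 / 328), -(9 * (125360 / 984) + -528608 / 328), -(9 * (31603200 / 26568) + -134912 / 328), 0, 0, 0;
         0, 450, -(9 * (30960 / 328) + 185760 / 328), -(9 * (125360 / 984) + -528608 / 328), -(9 * (31603200 / 26568) + -134912 / 328), 0, 0;
         0, 0, 450, -(9 * (30960 / 328) + 185760 / 328), -(9 * (125360 / 984) + -528608 / 328), -(9 * (31603200 / 26568) + -134912 / 328), 0;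
         0, 0, 0, 450, -(9 * (30960 / 328) + 185760 / 328), -(9 * (125360 / 984) + -528608 / 328), -(9 * (31603200 / 26568) + -134912 / 328)]
      = -1457890459574161592339200000 / 1681) := by
    rw [hM, Matrix.det_mul, Lmat_det, Umat_det, one_mul]
  exact ⟨key, by rw [key]; norm_num⟩
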